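/- If B is a complex LLL-reduced basis with parameter δ and α = 1/(δ-1/2), then ∏_{i=1}^n ‖bᵢ‖ ≤ α^{n(n-1)/4} |det B|. -/

import Mathlib

/-- The `i`-th column of a complex matrix, as a vector of `ℂⁿ`. -/
noncomputable def col {n : ℕ} (B : Matrix (Fin n) (Fin n) ℂ) (i : Fin n) :
    EuclideanSpace ℂ (Fin n) :=
  (WithLp.equiv 2 (Fin n → ℂ)).symm (fun x => B x i)

/-- Gram-Schmidt orthogonalization of a family of vectors in ℂⁿ. -/
noncomputable def gso {n : ℕ} (b : Fin n → EuclideanSpace ℂ (Fin n)) :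
    Fin n → EuclideanSpace ℂ (Fin n) :=
  @InnerProductSpace.gramSchmidt ℂ _ _ _ _ (Fin n) _ _ (inferInstance : WellFoundedLT (Fin n)) b

/-- Gram-Schmidt coefficient μ_{i,j} = ⟨bᵢ, b̂ⱼ⟩ / ‖b̂ⱼ‖². -/
noncomputable def mu {n : ℕ} (b : Fin n → EuclideanSpace ℂ (Fin n)) (i j : Fin n) : ℂ :=
  (inner ℂ (gso b j) (b i) : ℂ) / ((‖gso b j‖ ^ 2 : ℝ) : ℂ)

/-- B is complex LLL-reduced with parameter δ: size-reduced plus the Lovász condition. -/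
def LLLReduced {n : ℕ} (δ : ℝ) (b : Fin n → EuclideanSpace ℂ (Fin n)) : Prop :=
  (∀ i j : Fin n, j < i → |(mu b i j).re| ≤ 1/2 ∧ |(mu b i j).im| ≤ 1/2) ∧
  (∀ i j : Fin n, j.val + 1 = i.val →
    ‖gso b i‖^2 ≥ (δ - ‖mu b i j‖ ^ 2) * ‖gso b j‖^2)

/-!
Write bᵢ = b̂ᵢ + ∑_{j<i} μᵢⱼ b̂ⱼ. In the orthonormal basis obtained by normalising the b̂ᵢ, the
coordinate matrix of the bᵢ is triangular with diagonal entries of modulus ‖b̂ᵢ‖, so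
|det B| = ∏ ‖b̂ᵢ‖. Size reduction gives |μᵢⱼ|² ≤ 1/2, so the Lovász condition yields
‖b̂ⱼ‖² ≤ α^{i-j} ‖b̂ᵢ‖² for j ≤ i, and by Pythagoras
‖bᵢ‖² ≤ (1 + ½ ∑_{j<i} α^{i-j}) ‖b̂ᵢ‖² ≤ α^i ‖b̂ᵢ‖², the last step because α ≥ 2.
Taking square roots and multiplying over i gives the exponent ∑ i/2 = n(n-1)/4.
-/

open Finset InnerProductSpace

section GramSchmidt

variable {𝕜 E ι : Type*} [RCLike 𝕜] [NormedAddCommGroup E] [InnerProductSpace 𝕜 E]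

theorem norm_sum_smul_sq_of_pairwise_inner_eq_zero {v : ι → E}
    (hv : Pairwise fun i j => ⟪v i, v j⟫_𝕜 = 0) (c : ι → 𝕜) (s : Finset ι) :
    ‖∑ i ∈ s, c i • v i‖ ^ 2 = ∑ i ∈ s, ‖c i‖ ^ 2 * ‖v i‖ ^ 2 := by
  classical
  induction s using Finset.induction with
  | empty => simp
  | insert a s ha ih =>
    have horth : ⟪c a • v a, ∑ i ∈ s, c i • v i⟫_𝕜 = 0 := by
      rw [inner_sum]
      refine sum_eq_zero fun i hi => ?_
      rw [inner_smul_left, inner_smul_right, hv (ne_of_mem_of_not_mem hi ha).symm, mul_zero,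
        mul_zero]
    rw [sum_insert ha, sum_insert ha, ← ih, sq, sq, sq,
      norm_add_sq_eq_norm_sq_add_norm_sq_of_inner_eq_zero _ _ horth, norm_smul]
    ring

variable [LinearOrder ι] [LocallyFiniteOrderBot ι] [WellFoundedLT ι]

theorem inner_gramSchmidt_self (f : ι → E) (i : ι) :
    ⟪gramSchmidt 𝕜 f i, f i⟫_𝕜 = (‖gramSchmidt 𝕜 f i‖ ^ 2 : ℝ) := by
  conv_lhs => rw [gramSchmidt_def'' 𝕜 f i]
  rw [inner_add_right, inner_self_eq_norm_sq_to_K, inner_sum]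
  simp only [inner_smul_right]
  rw [sum_eq_zero fun j hj => by rw [gramSchmidt_orthogonal 𝕜 f (mem_Iio.mp hj).ne', mul_zero]]
  simp

theorem norm_inner_gramSchmidtOrthonormalBasis_self [Fintype ι] [FiniteDimensional 𝕜 E]
    (h : Module.finrank 𝕜 E = Fintype.card ι) (f : ι → E) (i : ι) :
    ‖⟪gramSchmidtOrthonormalBasis h f i, f i⟫_𝕜‖ = ‖gramSchmidt 𝕜 f i‖ := by
  by_cases hi : gramSchmidtNormed 𝕜 f i = 0
  · have : gramSchmidt 𝕜 f i = 0 := by simpa [gramSchmidtNormed] using hi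
    rw [inner_gramSchmidtOrthonormalBasis_eq_zero h hi, this, norm_zero, norm_zero]
  · rw [gramSchmidtOrthonormalBasis_apply h hi, gramSchmidtNormed, inner_smul_left,
      inner_gramSchmidt_self, norm_mul]
    have : gramSchmidt 𝕜 f i ≠ 0 := by simpa [gramSchmidtNormed] using hi
    simp [field]

theorem OrthonormalBasis.norm_det_eq_prod_norm_gramSchmidt [Fintype ι] [DecidableEq ι]
    [FiniteDimensional 𝕜 E] (h : Module.finrank 𝕜 E = Fintype.card ι)
    (e : OrthonormalBasis ι 𝕜 E) (f : ι → E) :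
    ‖e.toBasis.det f‖ = ∏ i, ‖gramSchmidt 𝕜 f i‖ := by
  set e' := gramSchmidtOrthonormalBasis h f
  rw [Module.Basis.det_apply, ← e.toBasis.toMatrix_mul_toMatrix e'.toBasis, Matrix.det_mul,
    ← Module.Basis.det_apply, ← Module.Basis.det_apply, norm_mul, e'.coe_toBasis,
    e.det_to_matrix_orthonormalBasis, one_mul, gramSchmidtOrthonormalBasis_det, norm_prod]
  exact prod_congr rfl fun i _ => norm_inner_gramSchmidtOrthonormalBasis_self h f i

end GramSchmidt

theorem det_eq_basisFun_det_col {n : ℕ} (B : Matrix (Fin n) (Fin n) ℂ) :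
    B.det = (EuclideanSpace.basisFun (Fin n) ℂ).toBasis.det (col B) := by
  rw [Module.Basis.det_apply]
  rfl

theorem norm_det_eq_prod_norm_gso {n : ℕ} (B : Matrix (Fin n) (Fin n) ℂ) :
    ‖B.det‖ = ∏ i, ‖gso (col B) i‖ := by
  rw [det_eq_basisFun_det_col]
  exact (EuclideanSpace.basisFun (Fin n) ℂ).norm_det_eq_prod_norm_gramSchmidt
    (finrank_euclideanSpace_fin.trans (Fintype.card_fin n).symm) _

theorem self_eq_gso_add_sum_mu_smul {n : ℕ} (b : Fin n → EuclideanSpace ℂ (Fin n))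
    (i : Fin n) :
    b i = gso b i + ∑ j ∈ Iio i, mu b i j • gso b j := by
  simpa [gso, mu] using gramSchmidt_def'' ℂ b i

theorem norm_sq_eq_norm_gso_sq_add_sum {n : ℕ} (b : Fin n → EuclideanSpace ℂ (Fin n))
    (i : Fin n) :
    ‖b i‖ ^ 2 = ‖gso b i‖ ^ 2 + ∑ j ∈ Iio i, ‖mu b i j‖ ^ 2 * ‖gso b j‖ ^ 2 := by
  have horth : ⟪gso b i, ∑ j ∈ Iio i, mu b i j • gso b j⟫_ℂ = 0 := by
    rw [inner_sum]
    exact sum_eq_zero fun j hj => by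
      rw [inner_smul_right, gso, gramSchmidt_orthogonal ℂ b (mem_Iio.mp hj).ne', mul_zero]
  rw [← norm_sum_smul_sq_of_pairwise_inner_eq_zero (v := gso b)
      (gramSchmidt_pairwise_orthogonal ℂ b), sq, sq, sq,
    ← norm_add_sq_eq_norm_sq_add_norm_sq_of_inner_eq_zero _ _ horth,
    ← self_eq_gso_add_sum_mu_smul]

theorem one_add_half_sum_pow_sub_le_pow {α : ℝ} (hα : 2 ≤ α) (m : ℕ) :
    1 + (∑ k ∈ range m, α ^ (m - k)) / 2 ≤ α ^ m := by
  induction m with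
  | zero => simp
  | succ m ih =>
    rw [sum_range_succ', Nat.sub_zero]
    simp only [Nat.add_sub_add_right]
    have : α ^ m * 2 ≤ α ^ (m + 1) := by rw [pow_succ]; gcongr
    linarith

theorem sum_fin_val_div_two (n : ℕ) :
    ∑ i : Fin n, (i : ℝ) / 2 = ((n * (n - 1) : ℕ) : ℝ) / 4 := by
  rw [← sum_div, Fin.sum_univ_eq_sum_range (fun i => (i : ℝ)), ← sum_range_id_mul_two]
  push_cast
  ring

namespace LLLReduced

variable {n : ℕ} {δ : ℝ} {b : Fin n → EuclideanSpace ℂ (Fin n)}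

theorem norm_mu_sq_le (h : LLLReduced δ b) {i j : Fin n} (hji : j < i) :
    ‖mu b i j‖ ^ 2 ≤ 1 / 2 := by
  obtain ⟨hre, him⟩ := h.1 i j hji
  rw [Complex.sq_norm, Complex.normSq_apply, ← sq, ← sq, ← sq_abs (mu b i j).re,
    ← sq_abs (mu b i j).im]
  nlinarith [abs_nonneg (mu b i j).re, abs_nonneg (mu b i j).im]

theorem norm_gso_sq_le_of_succ (h : LLLReduced δ b) (hδ : 1 / 2 < δ) {i j : Fin n}
    (hij : j.val + 1 = i.val) :
    ‖gso b j‖ ^ 2 ≤ 1 / (δ - 1 / 2) * ‖gso b i‖ ^ 2 := by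
  have hlovasz := h.2 i j hij
  have hmu := h.norm_mu_sq_le (j := j) (i := i) (by rw [Fin.lt_def]; omega)
  rw [div_mul_eq_mul_div, one_mul, le_div_iff₀ (by linarith)]
  nlinarith [sq_nonneg ‖gso b j‖]

theorem norm_gso_sq_le (h : LLLReduced δ b) (hδ : 1 / 2 < δ) {i j : Fin n} (hji : j ≤ i) :
    ‖gso b j‖ ^ 2 ≤ (1 / (δ - 1 / 2)) ^ (i - j : ℕ) * ‖gso b i‖ ^ 2 := by
  obtain ⟨k, hk⟩ := Nat.exists_eq_add_of_le (Fin.le_def.mp hji)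
  induction k generalizing i with
  | zero => simp [Fin.ext hk]
  | succ k ih =>
    set i' : Fin n := ⟨j + k, by omega⟩
    calc ‖gso b j‖ ^ 2 ≤ (1 / (δ - 1 / 2)) ^ k * ‖gso b i'‖ ^ 2 := by
          simpa [i'] using ih (i := i') (Fin.le_def.mpr (by simp [i'])) rfl
      _ ≤ (1 / (δ - 1 / 2)) ^ k * (1 / (δ - 1 / 2) * ‖gso b i‖ ^ 2) := by
          have : 0 < δ - 1 / 2 := by linarith
          gcongr
          exact h.norm_gso_sq_le_of_succ hδ (by simp [i']; omega)
      _ = (1 / (δ - 1 / 2)) ^ (i - j : ℕ) * ‖gso b i‖ ^ 2 := by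
          rw [hk, Nat.add_sub_cancel_left]; ring

theorem norm_sq_le (h : LLLReduced δ b) (hδ1 : 1 / 2 < δ) (hδ2 : δ ≤ 1) (i : Fin n) :
    ‖b i‖ ^ 2 ≤ (1 / (δ - 1 / 2)) ^ (i : ℕ) * ‖gso b i‖ ^ 2 := by
  set α := 1 / (δ - 1 / 2)
  have hα : 2 ≤ α := by rw [le_one_div (by norm_num) (by linarith)]; linarith
  have hgeom : ∑ j ∈ Iio i, α ^ (i - j : ℕ) = ∑ k ∈ range i, α ^ (i - k) := by
    rw [← Nat.Iio_eq_range, ← Fin.map_valEmbedding_Iio, sum_map]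
    rfl
  calc ‖b i‖ ^ 2 = ‖gso b i‖ ^ 2 + ∑ j ∈ Iio i, ‖mu b i j‖ ^ 2 * ‖gso b j‖ ^ 2 :=
        norm_sq_eq_norm_gso_sq_add_sum b i
    _ ≤ ‖gso b i‖ ^ 2 + ∑ j ∈ Iio i, 1 / 2 * (α ^ (i - j : ℕ) * ‖gso b i‖ ^ 2) := by
        gcongr with j hj
        · exact h.norm_mu_sq_le (mem_Iio.mp hj)
        · exact h.norm_gso_sq_le hδ1 (mem_Iio.mp hj).le
    _ = (1 + (∑ k ∈ range i, α ^ (i - k)) / 2) * ‖gso b i‖ ^ 2 := by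
        rw [← hgeom, ← mul_sum, ← sum_mul]; ring
    _ ≤ α ^ (i : ℕ) * ‖gso b i‖ ^ 2 := by
        gcongr
        exact one_add_half_sum_pow_sub_le_pow hα i

theorem norm_le (h : LLLReduced δ b) (hδ1 : 1 / 2 < δ) (hδ2 : δ ≤ 1) (i : Fin n) :
    ‖b i‖ ≤ (1 / (δ - 1 / 2)) ^ ((i : ℝ) / 2) * ‖gso b i‖ := by
  have hα : 0 ≤ 1 / (δ - 1 / 2) := by rw [one_div_nonneg]; linarith
  refine le_of_pow_le_pow_left₀ two_ne_zero (by positivity) ?_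
  rw [mul_pow, ← Real.rpow_mul_natCast hα, Nat.cast_two, div_mul_cancel₀ _ two_ne_zero,
    Real.rpow_natCast]
  exact h.norm_sq_le hδ1 hδ2 i

end LLLReduced

theorem stmt4_general (n : ℕ) (δ : ℝ) (hδ1 : 1/2 < δ) (hδ2 : δ ≤ 1)
    (B : Matrix (Fin n) (Fin n) ℂ)
    (hLLL : LLLReduced δ (col B)) :
    ∏ i : Fin n, ‖col B i‖ ≤
      (1 / (δ - 1/2)) ^ (((n * (n - 1) : ℕ) : ℝ) / 4) * ‖B.det‖ := by
  have hα : 0 < 1 / (δ - 1 / 2) := by rw [one_div_pos]; linarith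
  calc ∏ i, ‖col B i‖ ≤ ∏ i : Fin n, (1 / (δ - 1 / 2)) ^ ((i : ℝ) / 2) * ‖gso (col B) i‖ :=
        prod_le_prod (fun i _ => norm_nonneg _) fun i _ => hLLL.norm_le hδ1 hδ2 i
    _ = (1 / (δ - 1/2)) ^ (((n * (n - 1) : ℕ) : ℝ) / 4) * ‖B.det‖ := by
        rw [prod_mul_distrib, ← Real.rpow_sum_of_pos hα, sum_fin_val_div_two,
          norm_det_eq_prod_norm_gso]

theorem stmt4 (n : ℕ) (δ : ℝ) (hδ1 : 1/2 < δ) (hδ2 : δ ≤ 1)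
    (B : Matrix (Fin n) (Fin n) ℂ) (hdet : B.det ≠ 0)
    (hLLL : LLLReduced δ (col B)) :
    ∏ i : Fin n, ‖col B i‖ ≤
      (1 / (δ - 1/2)) ^ (((n * (n - 1) : ℕ) : ℝ) / 4) * ‖B.det‖ :=
  stmt4_general n δ hδ1 hδ2 B hLLL
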